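/- Let P ∈ MRPD(w) and let pipes j and j' (j ≠ j') both be removable pipes of P. Then the deletion operations commute: Φ_{j'}(Φ_j(P)) = Φ_j(Φ_{j'}(P)). -/

import Mathlib

open Polynomial

namespace GrothPS

/-- Filter a finset by an arbitrary (possibly non-decidable) predicate. -/
noncomputable def fselect {α : Type*} (p : α → Prop) (s : Finset α) : Finset α :=
  @Finset.filter α p (fun _ => Classical.propDecidable _) s

/-- Filter a list by an arbitrary (possibly non-decidable) predicate. -/
noncomputable def lselect {α : Type*} (p : α → Prop) (l : List α) : List α :=
  l.filter (fun a => @decide (p a) (Classical.propDecidable _))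

/-- `if`-term for an arbitrary proposition. -/
noncomputable def cIte {α : Sort*} (p : Prop) (a b : α) : α :=
  @ite α p (Classical.propDecidable p) a b

/-- The staircase shape of rank `n`: the set of (matrix-indexed) positions `(i,j)` with
`1 ≤ i`, `1 ≤ j` and `i + j ≤ n + 1`; row `i` consists of the `n + 1 - i` left-justified
tiles `(i,1),…,(i,n+1-i)`. -/
def staircase (n : ℕ) : Finset (ℕ × ℕ) :=
  (Finset.range (n + 2) ×ˢ Finset.range (n + 2)).filter
    (fun t => 1 ≤ t.1 ∧ 1 ≤ t.2 ∧ t.1 + t.2 ≤ n + 1)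

/-- One step in tracing a pipe through a pipe dream whose set of crossing tiles is `C`
(every other tile of the staircase being a bumping tile).  A state `((i,j),d)` means the
pipe is entering the tile in row `i` and column `j` from the top (`d = true`) or from the
right (`d = false`).  At a crossing tile the pipe goes straight (top→bottom, right→left);
at a bumping tile it turns (top→left, right→bottom).  States with `j = 0` mean the pipe has
already exited from the left boundary at row `i`; they are absorbing. -/
def step (C : Finset (ℕ × ℕ)) (s : (ℕ × ℕ) × Bool) : (ℕ × ℕ) × Bool :=
  if s.1.2 = 0 then s
  else if s.1 ∈ C then
    (if s.2 then ((s.1.1 + 1, s.1.2), true) else ((s.1.1, s.1.2 - 1), false))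
  else
    (if s.2 then ((s.1.1, s.1.2 - 1), false) else ((s.1.1 + 1, s.1.2), true))

/-- The state of the pipe entering at the top of column `c` after `k` tracing steps. -/
def pipeState (C : Finset (ℕ × ℕ)) (c k : ℕ) : (ℕ × ℕ) × Bool :=
  (step C)^[k] ((1, c), true)

/-- The pipe entering at the top of column `c` passes through the state `s`. -/
def pipePasses (C : Finset (ℕ × ℕ)) (c : ℕ) (s : (ℕ × ℕ) × Bool) : Prop :=
  ∃ k, pipeState C c k = s

/-- The pipe entering at the top of column `c` traverses the tile `t`, entering it from the
top (`d = true`) or from the right (`d = false`). -/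
def travTile (C : Finset (ℕ × ℕ)) (c : ℕ) (t : ℕ × ℕ) (d : Bool) : Prop :=
  pipePasses C c (t, d)

/-- The row of the left boundary at which the pipe entering at the top of column `c` exits
(for a rank-`n` diagram; `2 * n + 4` tracing steps always suffice). -/
def exitRow (n : ℕ) (C : Finset (ℕ × ℕ)) (c : ℕ) : ℕ :=
  (pipeState C c (2 * n + 4)).1.1

/-- The pipes entering at the top of columns `a` and `b` cross at the tile `t`. -/
def crossAt (C : Finset (ℕ × ℕ)) (a b : ℕ) (t : ℕ × ℕ) : Prop :=
  t ∈ C ∧ ((travTile C a t true ∧ travTile C b t false) ∨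
           (travTile C b t true ∧ travTile C a t false))

/-- A (marked) pipe diagram for a word: `word` is the word (with distinct positive entries)
labelling the pipes, `C` is the set of crossing tiles and `M` the set of marked bumping
tiles.  Its rank is `word.length`. -/
structure PD where
  word : List ℕ
  C : Finset (ℕ × ℕ)
  M : Finset (ℕ × ℕ)
deriving DecidableEq

/-- The entry column of the pipe labelled `x` in a diagram for the word `v`: pipes are
labelled by the entries of `v` in increasing order from left to right along the top
boundary, so the pipe labelled `x` enters at the top of column `rank of x in v` (+1, as
columns are 1-indexed). -/
def wordCol (v : List ℕ) (x : ℕ) : ℕ := (v.filter (fun y => decide (y < x))).length + 1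

/-- `P` is a marked reduced pipe dream of the word `P.word` (for a permutation
`w = w(1)⋯w(n)` take `P.word = [w(1),…,w(n)]`): the tiles fill the rank-`n` staircase with
no crossing tile on the southeast diagonal; reading the pipe labels along the left boundary
from top to bottom gives the word (pipe labelled `word.get r` exits at row `r+1`); any two
pipes cross at most once; and a bumping tile may be marked only if the two pipes traversing
it cross at some position strictly above its row. -/
def isMRPD (P : PD) : Prop :=
  P.word.Nodup ∧ (∀ x ∈ P.word, 1 ≤ x) ∧
  P.C ⊆ staircase P.word.length ∧ (∀ t ∈ P.C, t.1 + t.2 ≤ P.word.length) ∧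
  P.M ⊆ staircase P.word.length ∧ (∀ t ∈ P.M, t ∉ P.C) ∧
  (∀ r : Fin P.word.length,
    exitRow P.word.length P.C (wordCol P.word (P.word.get r)) = (r : ℕ) + 1) ∧
  (∀ a b, 1 ≤ a → a ≤ P.word.length → 1 ≤ b → b ≤ P.word.length →
    ∀ t t', crossAt P.C a b t → crossAt P.C a b t' → t = t') ∧
  (∀ t ∈ P.M, ∃ a b, 1 ≤ a ∧ a ≤ P.word.length ∧ 1 ≤ b ∧ b ≤ P.word.length ∧
    travTile P.C a t true ∧ travTile P.C b t false ∧
    ∃ t', crossAt P.C a b t' ∧ t'.1 < t.1)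

/-- The pipe labelled `j` is removable in `P`: (i) in the column where pipe `j` enters,
every crossing tile is traversed by pipe `j` and there is no marked bumping tile; (ii) for
every crossing tile traversed by pipe `j`, the tile directly above it (if any) is not an
unmarked bumping tile; (iii) pipe `j` traverses no marked bumping tile. -/
def Removable (P : PD) (j : ℕ) : Prop :=
  j ∈ P.word ∧
  (∀ i, (i, wordCol P.word j) ∈ P.C →
    (travTile P.C (wordCol P.word j) (i, wordCol P.word j) true ∨
     travTile P.C (wordCol P.word j) (i, wordCol P.word j) false)) ∧
  (∀ i, (i, wordCol P.word j) ∉ P.M) ∧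
  (∀ t ∈ P.C,
    (travTile P.C (wordCol P.word j) t true ∨ travTile P.C (wordCol P.word j) t false) →
    2 ≤ t.1 → ((t.1 - 1, t.2) ∈ P.C ∨ (t.1 - 1, t.2) ∈ P.M)) ∧
  (∀ t ∈ P.M, ¬ travTile P.C (wordCol P.word j) t true ∧
    ¬ travTile P.C (wordCol P.word j) t false)

/-- A core marked reduced pipe dream: none of its pipes is removable. -/
def isCore (P : PD) : Prop := ∀ j, ¬ Removable P j

/-- The pipe entering at the top of column `c` crosses from column `y + 1` into column `y`
(i.e. enters some tile of column `y` from the right) at some row `≤ i`. -/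
def crossedIntoLe (C : Finset (ℕ × ℕ)) (c y i : ℕ) : Prop :=
  ∃ i' ≤ i, pipePasses C c ((i', y), false)

/-- The position (together with the entering direction `d`) of the rank-`n` diagram `(C,·)`
with removable pipe entering at column `c` corresponding to the position `t` of the
rank-`(n-1)` diagram obtained by the deletion/merging operation: tiles strictly to the right
of column `c` are shifted one unit leftward, and in each column strictly to the left of `c`
the tile pieces lying below the removed pipe are shifted one unit upward. -/
noncomputable def oldPos (C : Finset (ℕ × ℕ)) (c : ℕ) (t : ℕ × ℕ) (d : Bool) : ℕ × ℕ :=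
  if c ≤ t.2 then (t.1, t.2 + 1)
  else (t.1 + cIte (crossedIntoLe C c (if d then t.2 - 1 else t.2) t.1) 1 0, t.2)

/-- The deletion/merging operation `Φ_j`, erasing the (removable) pipe labelled `j`. -/
noncomputable def PhiOp (P : PD) (j : ℕ) : PD :=
  ⟨P.word.erase j,
   fselect (fun t => oldPos P.C (wordCol P.word j) t true ∈ P.C)
     (staircase (P.word.length - 1)),
   fselect (fun t => oldPos P.C (wordCol P.word j) t true ∈ P.M)
     (staircase (P.word.length - 1))⟩

/-- The reduction map `Φ`: successively erase removable pipes while some pipe is removable. -/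
noncomputable def Phi (P : PD) : PD :=
  letI : Decidable (∃ j, Removable P j) := Classical.propDecidable _
  if h : ∃ j, Removable P j then Phi (PhiOp P (Classical.choose h)) else P
termination_by P.word.length
decreasing_by
  have hj : Classical.choose h ∈ P.word := (Classical.choose_spec h).1
  show (P.word.erase (Classical.choose h)).length < P.word.length
  rw [List.length_erase_of_mem hj]
  have h0 : 0 < P.word.length := List.length_pos_of_mem hj
  omega

/-- The finset of all marked reduced pipe dreams of the word `v`. -/
noncomputable def MRPDF (v : List ℕ) : Finset PD :=
  fselect isMRPD
    (((staircase v.length).powerset ×ˢ (staircase v.length).powerset).image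
      (fun p => ⟨v, p.1, p.2⟩))

/-- `Υ_v(β)`: the principal specialization of the β-Grothendieck polynomial,
`Σ_{P ∈ MRPD(v)} β^{mbt(P)}` (a polynomial in `β = X`). -/
noncomputable def UpsilonW (v : List ℕ) : Polynomial ℤ :=
  ∑ P ∈ MRPDF v, (X : Polynomial ℤ) ^ P.M.card

/-- The finset of all core marked reduced pipe dreams of the word `v`. -/
noncomputable def CMRPDF (v : List ℕ) : Finset PD := fselect isCore (MRPDF v)

/-- `d_v(β) = Σ_{P ∈ CMRPD(v)} β^{mbt(P)}`. -/
noncomputable def dPoly (v : List ℕ) : Polynomial ℤ :=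
  ∑ P ∈ CMRPDF v, (X : Polynomial ℤ) ^ P.M.card

/-- Marked reduced pipe dreams of `v` in which every pipe whose label is an entry of `v`
not appearing in `u` is non-removable. -/
noncomputable def CMRPDrelF (u v : List ℕ) : Finset PD :=
  fselect (fun P => ∀ j ∈ v, j ∉ u → ¬ Removable P j) (MRPDF v)

/-- `d_{u,v}(β) = Σ_{P ∈ CMRPD(u,v)} β^{mbt(P)}`. -/
noncomputable def dRel (u v : List ℕ) : Polynomial ℤ :=
  ∑ P ∈ CMRPDrelF u v, (X : Polynomial ℤ) ^ P.M.card

/-- The number of (ordinary) reduced pipe dreams of the word `v` (marked reduced pipe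
dreams with no marked bumping tile), i.e. `Υ_v = Υ_v(0)`. -/
noncomputable def NRPD (v : List ℕ) : ℕ :=
  (fselect (fun P => P.M = (∅ : Finset (ℕ × ℕ))) (MRPDF v)).card

/-- The one-line word `[w(1),…,w(n)]` of a permutation `w ∈ S_n`. -/
def permWord {n : ℕ} (w : Equiv.Perm (Fin n)) : List ℕ :=
  List.ofFn (fun r => (w r : ℕ) + 1)

/-- `p_v(w)`: the number of occurrences of the pattern `v ∈ S_m` in `w ∈ S_n`, i.e. the
number of strictly increasing index sequences along which the entries of `w` are in the
same relative order as `v`. -/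
noncomputable def pCount {m n : ℕ} (v : Equiv.Perm (Fin m)) (w : Equiv.Perm (Fin n)) : ℕ :=
  (fselect (fun f : Fin m → Fin n =>
      StrictMono f ∧ ∀ k l, v k < v l ↔ w (f k) < w (f l))
    Finset.univ).card

/-- The polynomials `c_w(β)`, defined recursively by `c_∅(β) = 1` and
`c_w(β) = Υ_w(β) − Σ_{0 ≤ m < n} Σ_{v ∈ S_m} c_v(β)·p_v(w)`. -/
noncomputable def cPoly (n : ℕ) (w : Equiv.Perm (Fin n)) : Polynomial ℤ :=
  UpsilonW (permWord w) -
    ∑ m ∈ (Finset.range n).attach,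
      ∑ v : Equiv.Perm (Fin (m : ℕ)), (pCount v w : Polynomial ℤ) * cPoly (m : ℕ) v
termination_by n
decreasing_by exact Finset.mem_range.mp m.2

/-- The pattern `1423` as a permutation in `S_4` (0-indexed values). -/
def pat1423 : Equiv.Perm (Fin 4) :=
  ⟨![0, 3, 1, 2], ![0, 2, 3, 1], by intro x; fin_cases x <;> rfl,
    by intro x; fin_cases x <;> rfl⟩

/-- The pattern `1342` as a permutation in `S_4` (0-indexed values). -/
def pat1342 : Equiv.Perm (Fin 4) :=
  ⟨![0, 2, 3, 1], ![0, 3, 1, 2], by intro x; fin_cases x <;> rfl,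
    by intro x; fin_cases x <;> rfl⟩

/-- `perm(v)`: the standardization of a word `v` with distinct entries, the permutation
whose entries have the same relative order as `v` (junk value `1` if `v` has a repeat). -/
noncomputable def permOf (v : List ℕ) : Equiv.Perm (Fin v.length) :=
  if h : v.Nodup then
    (Equiv.ofBijective
      (fun k => (⟨v.get k, List.mem_toFinset.mpr (v.get_mem ..)⟩ : {x // x ∈ v.toFinset}))
      (by
        rw [Fintype.bijective_iff_injective_and_card]
        constructor
        · intro a b hab
          exact List.nodup_iff_injective_get.mp h (by simpa using congrArg Subtype.val hab)
        · rw [Fintype.card_fin, Fintype.card_coe, List.toFinset_card_of_nodup h])).trans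
      ((v.toFinset.orderIsoOfFin (List.toFinset_card_of_nodup h)).symm.toEquiv)
  else 1

/-- The pointer sequence of the augmenting algorithm `Ψ_j`: `psiPtr P i k` is the value of
the pointer after the first `k` columns of `P` have been processed, starting from `i`. -/
def psiPtr (P : PD) (i : ℕ) : ℕ → ℕ
  | 0 => i
  | k + 1 =>
    if (psiPtr P i k - 1, k + 1) ∈ staircase P.word.length ∧
        (psiPtr P i k - 1, k + 1) ∉ P.C ∧ (psiPtr P i k - 1, k + 1) ∉ P.M then
      psiPtr P i k - 1
    else psiPtr P i k

/-- The augmenting operation `Ψ_j`, reinserting a pipe labelled `j` into a marked reduced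
pipe dream `P` of the word `v.erase j`, producing a diagram for the word `v`. -/
noncomputable def PsiOp (P : PD) (v : List ℕ) (j : ℕ) : PD :=
  ⟨v,
   fselect (fun t =>
     if t.2 ≤ (v.filter (fun y => decide (y < j))).length then
       (if t.1 < psiPtr P (v.idxOf j + 1) (t.2 - 1) then (t.1, t.2) ∈ P.C
        else if t.1 = psiPtr P (v.idxOf j + 1) (t.2 - 1) ∧
            psiPtr P (v.idxOf j + 1) t.2 = psiPtr P (v.idxOf j + 1) (t.2 - 1) then True
        else (t.1 - 1, t.2) ∈ P.C)
     else if t.2 = (v.filter (fun y => decide (y < j))).length + 1 then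
       t.1 < psiPtr P (v.idxOf j + 1) (v.filter (fun y => decide (y < j))).length
     else (t.1, t.2 - 1) ∈ P.C) (staircase v.length),
   fselect (fun t =>
     if t.2 ≤ (v.filter (fun y => decide (y < j))).length then
       (if t.1 < psiPtr P (v.idxOf j + 1) (t.2 - 1) then (t.1, t.2) ∈ P.M
        else if t.1 = psiPtr P (v.idxOf j + 1) (t.2 - 1) then False
        else (t.1 - 1, t.2) ∈ P.M)
     else if t.2 = (v.filter (fun y => decide (y < j))).length + 1 then False
     else (t.1, t.2 - 1) ∈ P.M) (staircase v.length)⟩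


/-! ### Auxiliary infrastructure for `phiOp_comm` -/

section Traj

variable {C : Finset (ℕ × ℕ)}

lemma mem_fselect {α : Type*} {p : α → Prop} {s : Finset α} {a : α} :
    a ∈ fselect p s ↔ a ∈ s ∧ p a := by
  classical
  simp [fselect, Finset.mem_filter]

lemma cIte_pos {α : Sort*} {p : Prop} (h : p) (a b : α) : cIte p a b = a := by
  simp [cIte, h]

lemma cIte_neg {α : Sort*} {p : Prop} (h : ¬ p) (a b : α) : cIte p a b = b := by
  simp [cIte, h]

lemma mem_staircase {m : ℕ} {t : ℕ × ℕ} :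
    t ∈ staircase m ↔ 1 ≤ t.1 ∧ 1 ≤ t.2 ∧ t.1 + t.2 ≤ m + 1 := by
  simp only [staircase, Finset.mem_filter, Finset.mem_product, Finset.mem_range]
  omega

lemma step_of_absorbed {s : (ℕ × ℕ) × Bool} (h : s.1.2 = 0) : step C s = s := by
  simp [step, h]

lemma step_mem_true {i y : ℕ} (hy : y ≠ 0) (hm : (i, y) ∈ C) :
    step C ((i, y), true) = ((i + 1, y), true) := by simp [step, hy, hm]

lemma step_mem_false {i y : ℕ} (hy : y ≠ 0) (hm : (i, y) ∈ C) :
    step C ((i, y), false) = ((i, y - 1), false) := by simp [step, hy, hm]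

lemma step_not_mem_true {i y : ℕ} (hy : y ≠ 0) (hm : (i, y) ∉ C) :
    step C ((i, y), true) = ((i, y - 1), false) := by simp [step, hy, hm]

lemma step_not_mem_false {i y : ℕ} (hy : y ≠ 0) (hm : (i, y) ∉ C) :
    step C ((i, y), false) = ((i + 1, y), true) := by simp [step, hy, hm]

lemma step_shape {s : (ℕ × ℕ) × Bool} (h : s.1.2 ≠ 0) :
    step C s = ((s.1.1 + 1, s.1.2), true) ∨ step C s = ((s.1.1, s.1.2 - 1), false) := by
  obtain ⟨⟨i, y⟩, d⟩ := s
  simp only at h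
  by_cases hm : (i, y) ∈ C <;> cases d
  · right; exact step_mem_false h hm
  · left; exact step_mem_true h hm
  · left; exact step_not_mem_false h hm
  · right; exact step_not_mem_true h hm

lemma pipeState_zero (c : ℕ) : pipeState C c 0 = ((1, c), true) := rfl

lemma pipeState_succ (c k : ℕ) :
    pipeState C c (k + 1) = step C (pipeState C c k) :=
  Function.iterate_succ_apply' _ _ _

lemma pipeState_frozen {c k : ℕ} (h : (pipeState C c k).1.2 = 0) (m : ℕ) :
    pipeState C c (k + m) = pipeState C c k := by
  induction m with
  | zero => rfl
  | succ m ih =>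
    rw [show k + (m + 1) = (k + m) + 1 from rfl, pipeState_succ, ih, step_of_absorbed h]

lemma nonabs_earlier {c k k' : ℕ} (h : (pipeState C c k).1.2 ≠ 0) (hk : k' ≤ k) :
    (pipeState C c k').1.2 ≠ 0 := by
  intro h0
  exact h (by rw [show k = k' + (k - k') by omega, pipeState_frozen h0]; exact h0)

lemma row_le_step (s : (ℕ × ℕ) × Bool) : s.1.1 ≤ (step C s).1.1 := by
  unfold step; split_ifs <;> simp <;> omega

lemma step_col_le (s : (ℕ × ℕ) × Bool) : (step C s).1.2 ≤ s.1.2 := by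
  unfold step; split_ifs <;> simp <;> omega

lemma step_col_ge (s : (ℕ × ℕ) × Bool) : s.1.2 ≤ (step C s).1.2 + 1 := by
  unfold step; split_ifs <;> simp <;> omega

lemma one_le_row (c k : ℕ) : 1 ≤ (pipeState C c k).1.1 := by
  induction k with
  | zero => simp [pipeState_zero]
  | succ k ih => rw [pipeState_succ]; exact le_trans ih (row_le_step _)

lemma row_mono (c : ℕ) {k k' : ℕ} (h : k ≤ k') :
    (pipeState C c k).1.1 ≤ (pipeState C c k').1.1 := by
  induction k' with
  | zero => simp_all
  | succ k' ih =>
    rcases Nat.lt_or_ge k (k' + 1) with h' | h'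
    · rw [pipeState_succ]
      exact le_trans (ih (by omega)) (row_le_step _)
    · have : k = k' + 1 := by omega
      subst this; rfl

lemma col_anti (c : ℕ) {k k' : ℕ} (h : k ≤ k') :
    (pipeState C c k').1.2 ≤ (pipeState C c k).1.2 := by
  induction k' with
  | zero => simp_all
  | succ k' ih =>
    rcases Nat.lt_or_ge k (k' + 1) with h' | h'
    · rw [pipeState_succ]
      exact le_trans (step_col_le _) (ih (by omega))
    · have : k = k' + 1 := by omega
      subst this; rfl

lemma potential {c k : ℕ} (h : (pipeState C c k).1.2 ≠ 0) :
    (pipeState C c k).1.1 + c = k + 1 + (pipeState C c k).1.2 := by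
  induction k with
  | zero => simp [pipeState_zero]
  | succ k ih =>
    have hk : (pipeState C c k).1.2 ≠ 0 := by
      intro h0
      exact h (by rw [show k + 1 = k + 1 from rfl, pipeState_frozen h0 1]; exact h0)
    have e := ih hk
    rcases step_shape (C := C) hk with hs | hs <;>
      rw [pipeState_succ, hs] at h ⊢ <;> simp at h ⊢ <;> omega

def backstep (C : Finset (ℕ × ℕ)) (t : (ℕ × ℕ) × Bool) : (ℕ × ℕ) × Bool :=
  if t.2 then ((t.1.1 - 1, t.1.2), decide ((t.1.1 - 1, t.1.2) ∈ C))
  else ((t.1.1, t.1.2 + 1), ! decide ((t.1.1, t.1.2 + 1) ∈ C))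

lemma backstep_step {s : (ℕ × ℕ) × Bool} (h : s.1.2 ≠ 0) (h2 : (step C s).1.2 ≠ 0) :
    backstep C (step C s) = s := by
  obtain ⟨⟨i, y⟩, d⟩ := s
  simp only at h
  by_cases hm : (i, y) ∈ C <;> cases d
  · rw [step_mem_false h hm]
    have hy : y - 1 + 1 = y := by omega
    simp [backstep, hy, hm]
  · rw [step_mem_true h hm]
    simp [backstep, hm]
  · rw [step_not_mem_false h hm]
    simp [backstep, hm]
  · rw [step_not_mem_true h hm]
    have hy : y - 1 + 1 = y := by omega
    simp [backstep, hy, hm]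

lemma back_chain {a b k k' : ℕ} (hk : pipeState C a k = pipeState C b k')
    (hne0 : (pipeState C a k).1.2 ≠ 0) :
    ∀ m, m ≤ k → m ≤ k' → pipeState C a (k - m) = pipeState C b (k' - m) := by
  intro m
  induction m with
  | zero => simpa using hk
  | succ m ih =>
    intro h1 h2
    have e := ih (by omega) (by omega)
    have hu : (pipeState C a (k - (m + 1))).1.2 ≠ 0 := nonabs_earlier hne0 (by omega)
    have hv : (pipeState C b (k' - (m + 1))).1.2 ≠ 0 := by
      intro h0
      apply nonabs_earlier hne0 (show k - m ≤ k by omega)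
      rw [e, show k' - m = (k' - (m + 1)) + 1 by omega, pipeState_succ,
        step_of_absorbed h0]
      exact h0
    have hsu : (step C (pipeState C a (k - (m + 1)))).1.2 ≠ 0 := by
      rw [← pipeState_succ, show k - (m+1) + 1 = k - m by omega]
      exact nonabs_earlier hne0 (by omega)
    have e1 : step C (pipeState C a (k - (m + 1))) = step C (pipeState C b (k' - (m + 1))) := by
      rw [← pipeState_succ, ← pipeState_succ, show k - (m+1) + 1 = k - m by omega,
        show k' - (m+1) + 1 = k' - m by omega]
      exact e
    have := backstep_step (C := C) hu hsu
    rw [e1, backstep_step hv (by rw [← e1]; exact hsu)] at this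
    exact this.symm

lemma pass_step {a : ℕ} {s : (ℕ × ℕ) × Bool} (h : pipePasses C a s) :
    pipePasses C a (step C s) := by
  obtain ⟨k, hk⟩ := h
  exact ⟨k + 1, by rw [pipeState_succ, hk]⟩

lemma pass_col_le {a : ℕ} {s : (ℕ × ℕ) × Bool} (h : pipePasses C a s) : s.1.2 ≤ a := by
  obtain ⟨k, hk⟩ := h
  have := col_anti (C := C) a (Nat.zero_le k)
  rw [hk] at this
  simpa [pipeState_zero] using this

private lemma distinct_aux {a b k k' : ℕ} (ha : 1 ≤ a)
    (hab : pipeState C a k = pipeState C b k') (hne0 : (pipeState C a k).1.2 ≠ 0)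
    (hkk : k ≤ k') : a = b := by
  have e := back_chain hab hne0 k le_rfl hkk
  simp only [Nat.sub_self, pipeState_zero] at e
  rcases Nat.eq_or_lt_of_le hkk with h | h
  · subst h
    have p1 := potential hne0
    have hne0' : (pipeState C b k).1.2 ≠ 0 := by rw [← hab]; exact hne0
    have p2 := potential hne0'
    rw [hab] at p1
    omega
  · have hne : (pipeState C b (k' - k)).1.2 ≠ 0 := by rw [← e]; simp; omega
    have hk1 : k' - k = (k' - k - 1) + 1 := by omega
    have hprev : (pipeState C b (k' - k - 1)).1.2 ≠ 0 := by
      intro h0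
      rw [hk1, pipeState_succ, step_of_absorbed h0] at e
      rw [← e] at h0
      simp at h0
      omega
    have := backstep_step (C := C) hprev (by rw [← pipeState_succ, ← hk1]; exact hne)
    rw [← pipeState_succ, ← hk1, ← e] at this
    have hrow := one_le_row (C := C) b (k' - k - 1)
    rw [← this] at hrow
    simp [backstep] at hrow

lemma passes_eq_start {a b : ℕ} (ha : 1 ≤ a) (hb : 1 ≤ b) {s : (ℕ × ℕ) × Bool}
    (hsa : pipePasses C a s) (hsb : pipePasses C b s) (hne0 : s.1.2 ≠ 0) : a = b := by
  obtain ⟨k, hk⟩ := hsa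
  obtain ⟨k', hk'⟩ := hsb
  rcases Nat.le_total k k' with h | h
  · exact distinct_aux ha (by rw [hk, hk']) (by rw [hk]; exact hne0) h
  · exact (distinct_aux hb (by rw [hk, hk']) (by rw [hk']; exact hne0) h).symm

lemma pass_false_unique {a : ℕ} (ha : 1 ≤ a) {i i' y : ℕ}
    (h1 : pipePasses C a ((i, y), false)) (h2 : pipePasses C a ((i', y), false)) :
    i = i' := by
  obtain ⟨k, hk⟩ := h1
  obtain ⟨k', hk'⟩ := h2
  rcases Nat.eq_zero_or_pos y with hy | hy
  · subst hy
    rcases Nat.le_total k k' with h | h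
    · have := pipeState_frozen (C := C) (c := a) (k := k) (by rw [hk]) (k' - k)
      rw [show k + (k' - k) = k' by omega, hk, hk'] at this
      exact (congrArg (fun s => s.1.1) this).symm
    · have := pipeState_frozen (C := C) (c := a) (k := k') (by rw [hk']) (k - k')
      rw [show k' + (k - k') = k by omega, hk, hk'] at this
      exact congrArg (fun s => s.1.1) this
  · -- y ≥ 1 : rows are forced equal since both visits happen at the unique crossing time
    have key : ∀ l l' j j' : ℕ, pipeState C a l = ((j, y), false) →
        pipeState C a l' = ((j', y), false) → l ≤ l' → l = l' := by
      intro l l' j j' hl hl' hll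
      by_contra hne
      have hl'pos : l' ≠ 0 := by
        intro h0; rw [h0, pipeState_zero] at hl'; simp at hl'
      have hprev : (pipeState C a (l' - 1)).1.2 ≠ 0 := by
        intro h0
        have := pipeState_frozen (C := C) (c := a) h0 1
        rw [show l' - 1 + 1 = l' by omega, hl'] at this
        rw [← this] at h0
        simp at h0; omega
      have hb := backstep_step (C := C) hprev
        (by rw [← pipeState_succ, show l' - 1 + 1 = l' by omega, hl']; simpa using hy.ne')
      rw [← pipeState_succ, show l' - 1 + 1 = l' by omega, hl'] at hb
      have hcol : (pipeState C a (l' - 1)).1.2 = y + 1 := by rw [← hb]; simp [backstep]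
      have hanti := col_anti (C := C) a (show l ≤ l' - 1 by omega)
      rw [hl, hcol] at hanti
      simp at hanti
    rcases Nat.le_total k k' with h | h
    · have hkk := key k k' i i' hk hk' h
      subst hkk
      have e := hk.symm.trans hk'
      exact congrArg (fun s => s.1.1) e
    · have hkk := key k' k i' i hk' hk h
      subst hkk
      have e := hk'.symm.trans hk
      exact (congrArg (fun s => s.1.1) e).symm
  
lemma pass_false_lt {a i y : ℕ} (ha : 1 ≤ a) (h : pipePasses C a ((i, y), false)) :
    y < a := by
  obtain ⟨k, hk⟩ := h
  rcases Nat.eq_zero_or_pos y with hy | hy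
  · omega
  · have hkpos : k ≠ 0 := by
      intro h0; rw [h0, pipeState_zero] at hk; simp at hk
    have hprev : (pipeState C a (k - 1)).1.2 ≠ 0 := by
      intro h0
      have := pipeState_frozen (C := C) (c := a) h0 1
      rw [show k - 1 + 1 = k by omega, hk] at this
      rw [← this] at h0; simp at h0; omega
    have hb := backstep_step (C := C) hprev
      (by rw [← pipeState_succ, show k - 1 + 1 = k by omega, hk]; simpa using hy.ne')
    rw [← pipeState_succ, show k - 1 + 1 = k by omega, hk] at hb
    have hcol : (pipeState C a (k - 1)).1.2 = y + 1 := by rw [← hb]; simp [backstep]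
    have := pass_col_le (C := C) (a := a) ⟨k - 1, rfl⟩
    omega

lemma step_col_drop {s : (ℕ × ℕ) × Bool} (h : (step C s).1.2 ≠ s.1.2) :
    step C s = ((s.1.1, s.1.2 - 1), false) := by
  obtain ⟨⟨i, y⟩, d⟩ := s
  rcases Nat.eq_zero_or_pos y with hy | hy
  · subst hy; rw [step_of_absorbed rfl] at h; simp at h
  · rcases step_shape (C := C) (s := ((i, y), d)) (by simpa using hy.ne') with hs | hs
    · rw [hs] at h; simp at h
    · exact hs

lemma pass_exists {a K y : ℕ} (habs : (pipeState C a K).1.2 = 0) (hy : y < a) :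
    ∃ i, pipePasses C a ((i, y), false) := by
  classical
  have hex : ∃ k, (pipeState C a k).1.2 ≤ y := ⟨K, by omega⟩
  set k0 := Nat.find hex with hk0
  have hQ : (pipeState C a k0).1.2 ≤ y := Nat.find_spec hex
  have hk0pos : k0 ≠ 0 := by
    intro h0
    rw [h0, pipeState_zero] at hQ
    simp at hQ; omega
  have hnot : ¬ (pipeState C a (k0 - 1)).1.2 ≤ y := Nat.find_min hex (by omega)
  have hstep : pipeState C a k0 = step C (pipeState C a (k0 - 1)) := by
    rw [← pipeState_succ, show k0 - 1 + 1 = k0 by omega]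
  have hge := step_col_ge (C := C) (pipeState C a (k0 - 1))
  rw [← hstep] at hge
  have hdrop : (pipeState C a k0).1.2 ≠ (pipeState C a (k0 - 1)).1.2 := by omega
  have hdrop2 : (step C (pipeState C a (k0 - 1))).1.2 ≠ (pipeState C a (k0 - 1)).1.2 := by
    rw [← hstep]; exact hdrop
  have hsc := step_col_drop (C := C) hdrop2
  rw [hsc] at hstep
  have hcols : (pipeState C a (k0 - 1)).1.2 - 1 = y := by
    have h1 : (pipeState C a k0).1.2 = (pipeState C a (k0 - 1)).1.2 - 1 := by rw [hstep]
    omega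
  exact ⟨(pipeState C a (k0 - 1)).1.1, k0, by rw [hstep, hcols]⟩

noncomputable def rho (C : Finset (ℕ × ℕ)) (a y : ℕ) : ℕ :=
  sInf {i | pipePasses C a ((i, y), false)}

lemma rho_pass {a y : ℕ} (h : ∃ i, pipePasses C a ((i, y), false)) :
    pipePasses C a ((rho C a y, y), false) :=
  Nat.sInf_mem (s := {i | pipePasses C a ((i, y), false)}) h

lemma rho_eq {a i y : ℕ} (ha : 1 ≤ a) (h : pipePasses C a ((i, y), false)) :
    rho C a y = i :=
  pass_false_unique ha (rho_pass ⟨i, h⟩) h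

lemma rho_pos {a y : ℕ} (h : ∃ i, pipePasses C a ((i, y), false)) :
    1 ≤ rho C a y := by
  obtain ⟨k, hk⟩ := rho_pass h
  have := one_le_row (C := C) a k
  rw [hk] at this
  exact this

lemma exit_row_eq {a K i : ℕ} (habs : (pipeState C a K).1.2 = 0)
    (h : pipePasses C a ((i, 0), false)) : i = (pipeState C a K).1.1 := by
  obtain ⟨k, hk⟩ := h
  rcases Nat.le_total k K with hle | hle
  · have h2 := pipeState_frozen (C := C) (c := a) (k := k) (by rw [hk]) (K - k)
    rw [show k + (K - k) = K by omega, hk] at h2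
    rw [h2]
  · have h2 := pipeState_frozen (C := C) (c := a) (k := K) habs (k - K)
    rw [show K + (k - K) = k by omega, hk] at h2
    rw [← h2]

lemma absorbed_of_exit_le {a n : ℕ} (ha : 1 ≤ a) (han : a ≤ n)
    (hexit : (pipeState C a (2 * n + 4)).1.1 ≤ n) :
    (pipeState C a (2 * n + 4)).1.2 = 0 := by
  by_contra h
  have := potential (C := C) h
  omega

end Traj

section Sim

variable {C : Finset (ℕ × ℕ)} {n c a : ℕ}

lemma crossedIntoLe_iff {z i : ℕ} (hc : 1 ≤ c)
    (hex : ∃ r, pipePasses C c ((r, z), false)) :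
    crossedIntoLe C c z i ↔ rho C c z ≤ i := by
  constructor
  · rintro ⟨i', hi', hp⟩
    rw [rho_eq hc hp]; exact hi'
  · intro h
    exact ⟨rho C c z, h, rho_pass hex⟩

lemma oldPos_ge {t : ℕ × ℕ} (h : c ≤ t.2) (d : Bool) :
    oldPos C c t d = (t.1, t.2 + 1) := by
  simp only [oldPos, if_pos h]

lemma oldPos_lt_true {i y : ℕ} (hy : y < c) (hc : 1 ≤ c)
    (hex : ∃ r, pipePasses C c ((r, y - 1), false)) :
    oldPos C c (i, y) true = (i + (if rho C c (y - 1) ≤ i then 1 else 0), y) := by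
  have hni : ¬ c ≤ (i, y).2 := by simp; omega
  simp only [oldPos, if_neg hni]
  by_cases h : rho C c (y - 1) ≤ i
  · rw [if_pos h]
    congr 1
    simp only [if_true]
    rw [cIte_pos ((crossedIntoLe_iff hc hex).2 h)]
  · rw [if_neg h]
    congr 1
    simp only [if_true]
    rw [cIte_neg (fun hcr => h ((crossedIntoLe_iff hc hex).1 hcr))]

lemma oldPos_lt_false {i y : ℕ} (hy : y < c) (hc : 1 ≤ c)
    (hex : ∃ r, pipePasses C c ((r, y), false)) :
    oldPos C c (i, y) false = (i + (if rho C c y ≤ i then 1 else 0), y) := by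
  have hni : ¬ c ≤ (i, y).2 := by simp; omega
  simp only [oldPos, if_neg hni]
  by_cases h : rho C c y ≤ i
  · rw [if_pos h]
    congr 1
    simp only [Bool.false_eq_true, if_false]
    rw [cIte_pos ((crossedIntoLe_iff hc hex).2 h)]
  · rw [if_neg h]
    congr 1
    simp only [Bool.false_eq_true, if_false]
    rw [cIte_neg (fun hcr => h ((crossedIntoLe_iff hc hex).1 hcr))]

/-- The crossing set after deleting the pipe entering at column `c`. -/
noncomputable def newC (C : Finset (ℕ × ℕ)) (c m : ℕ) : Finset (ℕ × ℕ) :=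
  fselect (fun t => oldPos C c t true ∈ C) (staircase m)

lemma mem_newC {m : ℕ} {t : ℕ × ℕ} :
    t ∈ newC C c m ↔ t ∈ staircase m ∧ oldPos C c t true ∈ C := mem_fselect

/-- All facts about the removable pipe entering at column `c` that the simulation needs. -/
structure SimCtx (C : Finset (ℕ × ℕ)) (n c : ℕ) : Prop where
  hc1 : 1 ≤ c
  hcn : c ≤ n
  habs : (pipeState C c (2 * n + 4)).1.2 = 0
  hC : ∀ t ∈ C, t.1 + t.2 ≤ n
  hS3 : ∀ i, 1 ≤ i → ((i, c) ∈ C ↔ i < rho C c (c - 1))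
  hdich : ∀ w, 1 ≤ w → w < c →
    ((rho C c w, w) ∈ C ∧ rho C c (w - 1) = rho C c w) ∨
    ((rho C c w, w) ∉ C ∧ (rho C c w + 1, w) ∉ C ∧
      rho C c (w - 1) = rho C c w + 1 ∧ pipePasses C c ((rho C c w + 1, w), true))

namespace SimCtx

lemma hn1 (h : SimCtx C n c) : 1 ≤ n := le_trans h.hc1 h.hcn

lemma hex (h : SimCtx C n c) {z : ℕ} (hz : z < c) :
    ∃ r, pipePasses C c ((r, z), false) := pass_exists h.habs hz

lemma rho1 (h : SimCtx C n c) {z : ℕ} (hz : z < c) : 1 ≤ rho C c z :=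
  rho_pos (h.hex hz)

lemma mem_staircase_pred (h : SimCtx C n c) {t : ℕ × ℕ} :
    t ∈ staircase (n - 1) ↔ 1 ≤ t.1 ∧ 1 ≤ t.2 ∧ t.1 + t.2 ≤ n := by
  rw [mem_staircase]
  have := h.hn1
  omega

end SimCtx

/-- States of the old diagram that disappear under the deletion of the pipe at column
`c`: states in column `c`, and entries-from-the-top into a crossing tile traversed
horizontally by the deleted pipe. -/
def Skip (C : Finset (ℕ × ℕ)) (c : ℕ) (s : (ℕ × ℕ) × Bool) : Prop :=
  s.1.2 = c ∨ (s.2 = true ∧ s.1 ∈ C ∧ pipePasses C c (s.1, false))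

/-- The map taking (non-skipped) states of the old diagram to states of the new one. -/
noncomputable def psi (C : Finset (ℕ × ℕ)) (c : ℕ) (s : (ℕ × ℕ) × Bool) :
    (ℕ × ℕ) × Bool :=
  if c < s.1.2 then ((s.1.1, s.1.2 - 1), s.2)
  else ((s.1.1 - (if rho C c (if s.2 then s.1.2 - 1 else s.1.2) < s.1.1 then 1 else 0),
    s.1.2), s.2)

lemma psi_gt {i y : ℕ} {d : Bool} (h : c < y) :
    psi C c ((i, y), d) = ((i, y - 1), d) := by simp [psi, h]

lemma psi_le_true {i y : ℕ} (h : ¬ c < y) :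
    psi C c ((i, y), true) =
      ((i - (if rho C c (y - 1) < i then 1 else 0), y), true) := by
  simp [psi, h]

lemma psi_le_false {i y : ℕ} (h : ¬ c < y) :
    psi C c ((i, y), false) =
      ((i - (if rho C c y < i then 1 else 0), y), false) := by
  simp [psi, h]

lemma not_skip_false {i y : ℕ} (h : y ≠ c) : ¬ Skip C c ((i, y), false) := by
  simp [Skip, h]

lemma skip_col {i : ℕ} {d : Bool} : Skip C c ((i, c), d) := Or.inl rfl

lemma not_skip_true {i y : ℕ} (h : y ≠ c)
    (h2 : ¬ ((i, y) ∈ C ∧ pipePasses C c ((i, y), false))) :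
    ¬ Skip C c ((i, y), true) := by
  simp only [Skip]
  rintro (h' | ⟨-, hm, hp⟩)
  · exact h h'
  · exact h2 ⟨hm, hp⟩

/-- The deleted pipe and the traced pipe share no (non-exited) state. -/
lemma not_jpass (hc : 1 ≤ c) (ha : 1 ≤ a) (hane : a ≠ c) {s : (ℕ × ℕ) × Bool}
    (hp : pipePasses C a s) (hj : pipePasses C c s) (h0 : s.1.2 ≠ 0) : False :=
  hane (passes_eq_start ha hc hp hj h0)

/-- Traversal of the deleted column by the traced pipe. -/
lemma sim_run (hctx : SimCtx C n c) (ha1 : 1 ≤ a) {k i : ℕ}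
    (hk : pipeState C a (k + 1) = ((i, c), false)) :
    ∃ r, 2 ≤ r ∧ r ≤ 3 ∧ (∀ m, 0 < m → m < r → Skip C c (pipeState C a (k + m))) ∧
      ¬ Skip C c (pipeState C a (k + r)) ∧
      pipeState C a (k + r) =
        ((i + (if rho C c (c - 1) ≤ i then 1 else 0), c - 1), false) ∧
      psi C c (pipeState C a (k + r)) = ((i, c - 1), false) := by
  have hc1 := hctx.hc1
  have hi1 : 1 ≤ i := by
    have := one_le_row (C := C) a (k + 1)
    rw [hk] at this; exact this
  have hc0 : c ≠ 0 := by omega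
  by_cases hm : (i, c) ∈ C
  · -- crossing: exits immediately to the left
    have hir : i < rho C c (c - 1) := (hctx.hS3 i hi1).1 hm
    refine ⟨2, le_rfl, by omega, ?_, ?_, ?_, ?_⟩
    · intro m hm1 hm2
      have : m = 1 := by omega
      subst this
      rw [hk]; exact skip_col
    · rw [show k + 2 = (k + 1) + 1 from rfl, pipeState_succ, hk, step_mem_false hc0 hm]
      exact not_skip_false (by omega)
    · rw [show k + 2 = (k + 1) + 1 from rfl, pipeState_succ, hk, step_mem_false hc0 hm]
      rw [if_neg (by omega)]
      simp
    · rw [show k + 2 = (k + 1) + 1 from rfl, pipeState_succ, hk, step_mem_false hc0 hm,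
        psi_le_false (by omega)]
      rw [if_neg (by omega)]
      simp
  · -- bumping: go down one row, then exit left
    have hir : ¬ i < rho C c (c - 1) := fun h => hm ((hctx.hS3 i hi1).2 h)
    have hm2 : (i + 1, c) ∉ C := fun h => by
      have := (hctx.hS3 (i + 1) (by omega)).1 h
      omega
    have e2 : pipeState C a (k + 2) = ((i + 1, c), true) := by
      rw [show k + 2 = (k + 1) + 1 from rfl, pipeState_succ, hk, step_not_mem_false hc0 hm]
    have e3 : pipeState C a (k + 3) = ((i + 1, c - 1), false) := by
      rw [show k + 3 = (k + 2) + 1 from rfl, pipeState_succ, e2, step_not_mem_true hc0 hm2]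
    refine ⟨3, by omega, le_rfl, ?_, ?_, ?_, ?_⟩
    · intro m hm1 hm3
      interval_cases m
      · rw [hk]; exact skip_col
      · rw [e2]; exact skip_col
    · rw [e3]; exact not_skip_false (by omega)
    · rw [e3, if_pos (by omega)]
    · rw [e3, psi_le_false (by omega), if_pos (by omega)]
      simp

/-- The relative entry column of the traced pipe after deletion. -/
def newcol (c a : ℕ) : ℕ := if c < a then a - 1 else a

/-- Start of the simulation. -/
lemma sim_base (hctx : SimCtx C n c) (ha1 : 1 ≤ a) (hane : a ≠ c) :
    ∃ k0, k0 ≤ 1 ∧ ¬ Skip C c (pipeState C a k0) ∧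
      (∀ m, m < k0 → Skip C c (pipeState C a m)) ∧
      psi C c (pipeState C a k0) = ((1, newcol c a), true) := by
  have hc1 := hctx.hc1
  by_cases hsk : Skip C c (pipeState C a 0)
  · -- the very first tile is a deleted crossing
    rw [pipeState_zero] at hsk
    rcases hsk with h | ⟨-, hmem, hpass⟩
    · exact absurd h hane
    · simp only at hmem hpass
      have hac : a < c := pass_false_lt hc1 hpass
      have hra : rho C c a = 1 := rho_eq hc1 hpass
      have hra1 : rho C c (a - 1) = 1 := by
        rcases hctx.hdich a ha1 hac with ⟨-, he⟩ | ⟨hnm, -, -, -⟩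
        · rw [he, hra]
        · rw [hra] at hnm; exact absurd hmem hnm
      have e1 : pipeState C a 1 = ((2, a), true) := by
        rw [show (1 : ℕ) = 0 + 1 from rfl, pipeState_succ, pipeState_zero,
          step_mem_true (by omega) hmem]
      refine ⟨1, le_rfl, ?_, ?_, ?_⟩
      · rw [e1]
        refine not_skip_true (by omega) ?_
        rintro ⟨-, hp2⟩
        have := rho_eq hc1 hp2
        omega
      · intro m hm
        have : m = 0 := by omega
        subst this
        rw [pipeState_zero]
        exact Or.inr ⟨rfl, hmem, hpass⟩
      · rw [e1, psi_le_true (by omega), if_pos (by omega)]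
        have hnc : ¬ c < a := by omega
        simp [newcol, hnc]
  · refine ⟨0, by omega, hsk, by omega, ?_⟩
    rw [pipeState_zero]
    rcases Nat.lt_or_ge c a with h | h
    · rw [psi_gt h]
      simp [newcol, h]
    · have hac : a < c := by omega
      rw [psi_le_true (by omega), if_neg (by have := hctx.rho1 (show a - 1 < c by omega); omega)]
      have hnc : ¬ c < a := by omega
      simp [newcol, hnc]

end Sim

section SimStep

variable {C : Finset (ℕ × ℕ)} {n c a : ℕ}

/-- One step of the simulation between the traced pipe before and after deletion. -/
lemma sim_step (hctx : SimCtx C n c) (ha1 : 1 ≤ a) (hane : a ≠ c) {k : ℕ}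
    (hns : ¬ Skip C c (pipeState C a k)) :
    ∃ r, 1 ≤ r ∧ r ≤ 3 ∧ (∀ m, 0 < m → m < r → Skip C c (pipeState C a (k + m))) ∧
      ¬ Skip C c (pipeState C a (k + r)) ∧
      step (newC C c (n - 1)) (psi C c (pipeState C a k)) =
        psi C c (pipeState C a (k + r)) := by
  classical
  have hc1 := hctx.hc1
  rcases hE : pipeState C a k with ⟨⟨i, y⟩, d⟩
  have hi1 : 1 ≤ i := by
    have := one_le_row (C := C) a k; rw [hE] at this; exact this
  have hyc : y ≠ c := by
    intro h; subst h; exact hns (by rw [hE]; exact skip_col)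
  rcases Nat.eq_zero_or_pos y with hy0 | hy1
  · -- absorbed state: everything is frozen
    subst hy0
    have e1 : pipeState C a (k + 1) = ((i, 0), d) := by
      rw [pipeState_succ, hE, step_of_absorbed rfl]
    refine ⟨1, le_rfl, by omega, by omega, ?_, ?_⟩
    · rw [e1, ← hE]; exact hns
    · rw [e1, step_of_absorbed (by simp [psi])]
  rcases Nat.lt_or_ge c y with hygt | hylt
  · -- to the right of the deleted column
    have hy2 : 2 ≤ y := by omega
    have hyy : y - 1 + 1 = y := by omega
    by_cases hm : (i, y) ∈ C
    · have hnew : (i, y - 1) ∈ newC C c (n - 1) := by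
        rw [mem_newC, oldPos_ge (show c ≤ (i, y - 1).2 by simp; omega), hctx.mem_staircase_pred]
        have := hctx.hC _ hm
        simp only at this ⊢
        rw [hyy]
        exact ⟨⟨hi1, by omega, by omega⟩, hm⟩
      cases d
      · -- entered from the right at a crossing: move left
        have e1 : pipeState C a (k + 1) = ((i, y - 1), false) := by
          rw [pipeState_succ, hE, step_mem_false (by omega) hm]
        have hnstep : step (newC C c (n - 1)) (psi C c ((i, y), false)) =
            ((i, y - 1 - 1), false) := by
          rw [psi_gt hygt, step_mem_false (by omega) hnew]
        by_cases hyc1 : y - 1 = c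
        · obtain ⟨r, hr2, hr3, hskips, hnskip, -, hpsi⟩ :=
            sim_run hctx ha1 (k := k) (i := i) (by rw [e1, hyc1])
          refine ⟨r, by omega, hr3, hskips, hnskip, ?_⟩
          rw [hnstep, hpsi]
          have : y - 1 - 1 = c - 1 := by omega
          rw [this]
        · refine ⟨1, le_rfl, by omega, by omega, ?_, ?_⟩
          · rw [e1]; exact not_skip_false hyc1
          · rw [e1, hnstep, psi_gt (by omega)]
      · -- entered from the top at a crossing: move down
        have e1 : pipeState C a (k + 1) = ((i + 1, y), true) := by
          rw [pipeState_succ, hE, step_mem_true (by omega) hm]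
        refine ⟨1, le_rfl, by omega, by omega, ?_, ?_⟩
        · rw [e1]
          refine not_skip_true hyc ?_
          rintro ⟨-, hp⟩
          have := pass_false_lt hc1 hp; omega
        · rw [e1, psi_gt hygt, step_mem_true (by omega) hnew, psi_gt hygt]
    · have hnew : (i, y - 1) ∉ newC C c (n - 1) := by
        rw [mem_newC, oldPos_ge (show c ≤ (i, y - 1).2 by simp; omega)]
        simp only [hyy]
        rintro ⟨-, h2⟩
        exact hm h2
      cases d
      · -- entered from the right at a bump: move down
        have e1 : pipeState C a (k + 1) = ((i + 1, y), true) := by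
          rw [pipeState_succ, hE, step_not_mem_false (by omega) hm]
        refine ⟨1, le_rfl, by omega, by omega, ?_, ?_⟩
        · rw [e1]
          refine not_skip_true hyc ?_
          rintro ⟨-, hp⟩
          have := pass_false_lt hc1 hp; omega
        · rw [e1, psi_gt hygt, step_not_mem_false (by omega) hnew, psi_gt hygt]
      · -- entered from the top at a bump: move left
        have e1 : pipeState C a (k + 1) = ((i, y - 1), false) := by
          rw [pipeState_succ, hE, step_not_mem_true (by omega) hm]
        have hnstep : step (newC C c (n - 1)) (psi C c ((i, y), true)) =
            ((i, y - 1 - 1), false) := by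
          rw [psi_gt hygt, step_not_mem_true (by omega) hnew]
        by_cases hyc1 : y - 1 = c
        · obtain ⟨r, hr2, hr3, hskips, hnskip, -, hpsi⟩ :=
            sim_run hctx ha1 (k := k) (i := i) (by rw [e1, hyc1])
          refine ⟨r, by omega, hr3, hskips, hnskip, ?_⟩
          rw [hnstep, hpsi]
          have : y - 1 - 1 = c - 1 := by omega
          rw [this]
        · refine ⟨1, le_rfl, by omega, by omega, ?_, ?_⟩
          · rw [e1]; exact not_skip_false hyc1
          · rw [e1, hnstep, psi_gt (by omega)]
  · -- strictly to the left of the deleted column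
    have hylt' : y < c := by omega
    have hylt1 : y - 1 < c := by omega
    have hexy := hctx.hex hylt'
    have hexy1 := hctx.hex hylt1
    have hry := hctx.rho1 hylt'
    have hry1 := hctx.rho1 hylt1
    have hd := hctx.hdich y hy1 hylt'
    have hmono : rho C c y ≤ rho C c (y - 1) ∧ rho C c (y - 1) ≤ rho C c y + 1 := by
      rcases hd with ⟨-, he⟩ | ⟨-, -, he, -⟩ <;> omega
    have hnlt : ¬ c < y := by omega
    cases d
    · -- d = false
      have hiy : i ≠ rho C c y := by
        intro hiq
        exact not_jpass hc1 ha1 hane ⟨k, hE⟩ (by rw [hiq]; exact rho_pass hexy)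
          (by simp; omega)
      by_cases hspec : rho C c (y - 1) = rho C c y + 1 ∧ i = rho C c y + 1
      · -- the merged pair of bumps
        obtain ⟨hb, hieq⟩ := hspec
        rcases hd with ⟨-, he⟩ | ⟨hm1, hm2, he, hpassj⟩
        · omega
        have hm : (i, y) ∉ C := by rw [hieq]; exact hm2
        have hnew : (i - 1, y) ∉ newC C c (n - 1) := by
          rw [mem_newC, oldPos_lt_true hylt' hc1 hexy1]
          rw [if_neg (by omega)]
          rintro ⟨-, h2⟩
          simp only [Nat.add_zero] at h2
          exact hm1 (by rw [show rho C c y = i - 1 by omega] at hm1 ⊢; exact h2)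
        have e1 : pipeState C a (k + 1) = ((i + 1, y), true) := by
          rw [pipeState_succ, hE, step_not_mem_false (by omega) hm]
        refine ⟨1, le_rfl, by omega, by omega, ?_, ?_⟩
        · rw [e1]
          refine not_skip_true hyc ?_
          rintro ⟨-, hp⟩
          have := rho_eq hc1 hp; omega
        · rw [e1, psi_le_false hnlt, if_pos (by omega),
            step_not_mem_false (by omega) hnew, psi_le_true hnlt, if_pos (by omega)]
          congr 2
          omega
      · -- generic position for d = false
        set sh : ℕ := if rho C c y < i then 1 else 0 with hsh
        have hige : rho C c y < i → rho C c (y - 1) ≤ i - 1 := by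
          intro hlt
          rcases hd with ⟨-, he⟩ | ⟨-, hm2, he, -⟩
          · omega
          · have : i ≠ rho C c y + 1 := fun h2 => hspec ⟨he, h2⟩
            omega
        have hcont : (i - sh) + (if rho C c (y - 1) ≤ i - sh then 1 else 0) = i := by
          rw [hsh]
          split_ifs <;> omega
        have hcontent : oldPos C c (i - sh, y) true = (i, y) := by
          rw [oldPos_lt_true hylt' hc1 hexy1, hcont]
        by_cases hm : (i, y) ∈ C
        · have hnew : (i - sh, y) ∈ newC C c (n - 1) := by
            rw [mem_newC, hcontent, hctx.mem_staircase_pred]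
            have := hctx.hC _ hm
            simp only at this
            refine ⟨⟨?_, by omega, by omega⟩, hm⟩
            rw [hsh]; split_ifs <;> omega
          have e1 : pipeState C a (k + 1) = ((i, y - 1), false) := by
            rw [pipeState_succ, hE, step_mem_false (by omega) hm]
          refine ⟨1, le_rfl, by omega, by omega, ?_, ?_⟩
          · rw [e1]; exact not_skip_false (by omega)
          · rw [e1, psi_le_false hnlt, ← hsh, step_mem_false (by omega) hnew,
              psi_le_false (by omega)]
            congr 3
            rw [hsh]
            have := hige
            split_ifs <;> omega
        · have hnew : (i - sh, y) ∉ newC C c (n - 1) := by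
            rw [mem_newC, hcontent]
            rintro ⟨-, h2⟩
            exact hm h2
          have e1 : pipeState C a (k + 1) = ((i + 1, y), true) := by
            rw [pipeState_succ, hE, step_not_mem_false (by omega) hm]
          by_cases hskp : Skip C c (pipeState C a (k + 1))
          · have hskp' := hskp
            rw [e1] at hskp'
            rcases hskp' with h | ⟨-, hmem1, hpass1⟩
            · simp at h; omega
            simp only at hmem1 hpass1
            have hq : rho C c y = i + 1 := rho_eq hc1 hpass1
            have he1' : rho C c (y - 1) = i + 1 := by
              rcases hd with ⟨-, he⟩ | ⟨hm1, -, -, -⟩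
              · omega
              · rw [hq] at hm1; exact absurd hmem1 hm1
            have hshz : sh = 0 := by rw [hsh, if_neg (by omega)]
            have e2 : pipeState C a (k + 2) = ((i + 2, y), true) := by
              rw [show k + 2 = (k + 1) + 1 from rfl, pipeState_succ, e1,
                step_mem_true (by omega) hmem1]
            refine ⟨2, by omega, by omega, ?_, ?_, ?_⟩
            · intro m h1 h2
              have : m = 1 := by omega
              subst this; exact hskp
            · rw [e2]
              refine not_skip_true hyc ?_
              rintro ⟨-, hp⟩
              have := rho_eq hc1 hp; omega
            · have hnew0 : (i, y) ∉ newC C c (n - 1) := by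
                rw [← Nat.sub_zero i, ← hshz]; exact hnew
              rw [e2, psi_le_false hnlt, ← hsh, hshz, Nat.sub_zero,
                step_not_mem_false (by omega) hnew0, psi_le_true hnlt,
                if_pos (by omega)]
              congr 2
          · refine ⟨1, le_rfl, by omega, by omega, hskp, ?_⟩
            -- need i + 1 ≠ rho C c (y - 1) in the "i < rho y" regime
            have hne1 : i < rho C c y → rho C c (y - 1) < i + 1 → False := by
              intro h1 h2
              omega
            rw [e1, psi_le_false hnlt, ← hsh,
              step_not_mem_false (by omega) hnew, psi_le_true hnlt]
            congr 2
            have := hige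
            rw [hsh]
            split_ifs <;> omega
        
    · -- d = true
      have hiy1 : i ≠ rho C c (y - 1) := by
        intro hiq
        rcases hd with ⟨hmem, he⟩ | ⟨hm1, hm2, he, hpassj⟩
        · refine hns ?_
          rw [hE]
          refine Or.inr ⟨rfl, ?_, ?_⟩
          · rw [show (i, y) = (rho C c y, y) by rw [hiq, he]]; exact hmem
          · rw [show ((i, y) : ℕ × ℕ) = (rho C c y, y) by rw [hiq, he]]
            exact rho_pass hexy
        · exact not_jpass hc1 ha1 hane ⟨k, hE⟩
            (by rw [show ((i, y), true) = ((rho C c y + 1, y), true) by rw [hiq, he]]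
                exact hpassj)
            (by simp; omega)
      set sh : ℕ := if rho C c (y - 1) < i then 1 else 0 with hsh
      have hcont : (i - sh) + (if rho C c (y - 1) ≤ i - sh then 1 else 0) = i := by
        rw [hsh]
        split_ifs <;> omega
      have hcontent : oldPos C c (i - sh, y) true = (i, y) := by
        rw [oldPos_lt_true hylt' hc1 hexy1, hcont]
      by_cases hm : (i, y) ∈ C
      · have hnew : (i - sh, y) ∈ newC C c (n - 1) := by
          rw [mem_newC, hcontent, hctx.mem_staircase_pred]
          have := hctx.hC _ hm
          simp only at this
          refine ⟨⟨?_, by omega, by omega⟩, hm⟩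
          rw [hsh]; split_ifs <;> omega
        have e1 : pipeState C a (k + 1) = ((i + 1, y), true) := by
          rw [pipeState_succ, hE, step_mem_true (by omega) hm]
        by_cases hskp : Skip C c (pipeState C a (k + 1))
        · have hskp' := hskp
          rw [e1] at hskp'
          rcases hskp' with h | ⟨-, hmem1, hpass1⟩
          · simp at h; omega
          simp only at hmem1 hpass1
          have hq : rho C c y = i + 1 := rho_eq hc1 hpass1
          have he1' : rho C c (y - 1) = i + 1 := by
            rcases hd with ⟨-, he⟩ | ⟨hm1, -, -, -⟩
            · omega
            · rw [hq] at hm1; exact absurd hmem1 hm1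
          have hshz : sh = 0 := by rw [hsh, if_neg (by omega)]
          have e2 : pipeState C a (k + 2) = ((i + 2, y), true) := by
            rw [show k + 2 = (k + 1) + 1 from rfl, pipeState_succ, e1,
              step_mem_true (by omega) hmem1]
          refine ⟨2, by omega, by omega, ?_, ?_, ?_⟩
          · intro m h1 h2
            have : m = 1 := by omega
            subst this; exact hskp
          · rw [e2]
            refine not_skip_true hyc ?_
            rintro ⟨-, hp⟩
            have := rho_eq hc1 hp; omega
          · have hnew0 : (i, y) ∈ newC C c (n - 1) := by
              rw [← Nat.sub_zero i, ← hshz]; exact hnew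
            rw [e2, psi_le_true hnlt, ← hsh, hshz, Nat.sub_zero,
              step_mem_true (by omega) hnew0, psi_le_true hnlt,
              if_pos (by omega)]
            congr 2
        · have hne1 : i + 1 ≠ rho C c (y - 1) := by
            intro hiq
            rcases hd with ⟨hmem, he⟩ | ⟨hm1, hm2, he, hpassj⟩
            · refine hskp ?_
              rw [e1]
              refine Or.inr ⟨rfl, ?_, ?_⟩
              · rw [show ((i + 1, y) : ℕ × ℕ) = (rho C c y, y) by rw [← he, ← hiq]]
                exact hmem
              · rw [show ((i + 1, y) : ℕ × ℕ) = (rho C c y, y) by rw [← he, ← hiq]]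
                exact rho_pass hexy
            · exact not_jpass hc1 ha1 hane ⟨k + 1, e1⟩
                (by rw [show ((i + 1, y), true) = ((rho C c y + 1, y), true)
                      by rw [← he, ← hiq]]
                    exact hpassj)
                (by simp; omega)
          refine ⟨1, le_rfl, by omega, by omega, hskp, ?_⟩
          rw [e1, psi_le_true hnlt, ← hsh, step_mem_true (by omega) hnew,
            psi_le_true hnlt]
          congr 2
          rw [hsh]
          split_ifs <;> omega
      · have hnew : (i - sh, y) ∉ newC C c (n - 1) := by
          rw [mem_newC, hcontent]
          rintro ⟨-, h2⟩
          exact hm h2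
        have e1 : pipeState C a (k + 1) = ((i, y - 1), false) := by
          rw [pipeState_succ, hE, step_not_mem_true (by omega) hm]
        refine ⟨1, le_rfl, by omega, by omega, ?_, ?_⟩
        · rw [e1]; exact not_skip_false (by omega)
        · rw [e1, psi_le_true hnlt, ← hsh, step_not_mem_true (by omega) hnew,
            psi_le_false (by omega)]

end SimStep

section SimMain

variable {C : Finset (ℕ × ℕ)} {n c a : ℕ}

lemma sim_seq (hctx : SimCtx C n c) (ha1 : 1 ≤ a) (hane : a ≠ c) :
    ∃ F : ℕ → ℕ,
      (∀ m', m' < F 0 → Skip C c (pipeState C a m')) ∧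
      (∀ m, ¬ Skip C c (pipeState C a (F m))) ∧
      (∀ m, pipeState (newC C c (n - 1)) (newcol c a) m = psi C c (pipeState C a (F m))) ∧
      (∀ m, F m < F (m + 1)) ∧
      (∀ m t, F m < t → t < F (m + 1) → Skip C c (pipeState C a t)) := by
  classical
  obtain ⟨k0, hk01, hk0ns, hk0sk, hk0psi⟩ := sim_base hctx ha1 hane
  set Q : ℕ → ℕ → Prop := fun m k => ¬ Skip C c (pipeState C a k) ∧
    pipeState (newC C c (n - 1)) (newcol c a) m = psi C c (pipeState C a k) with hQ
  have hQ0 : Q 0 k0 := ⟨hk0ns, by rw [pipeState_zero, hk0psi]⟩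
  have hstep : ∀ m k, Q m k → ∃ k', k < k' ∧ Q (m + 1) k' ∧
      ∀ t, k < t → t < k' → Skip C c (pipeState C a t) := by
    intro m k hq
    obtain ⟨r, hr1, hr3, hsk, hns', heq⟩ := sim_step hctx ha1 hane hq.1
    refine ⟨k + r, by omega, ⟨hns', by rw [pipeState_succ, hq.2, heq]⟩, ?_⟩
    intro t ht1 ht2
    have := hsk (t - k) (by omega) (by omega)
    rwa [show k + (t - k) = t by omega] at this
  let F : ∀ m : ℕ, {k : ℕ // Q m k} := fun m =>
    Nat.rec (motive := fun m => {k : ℕ // Q m k}) ⟨k0, hQ0⟩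
      (fun m ih => ⟨(hstep m ih.1 ih.2).choose,
        (hstep m ih.1 ih.2).choose_spec.2.1⟩) m
  have hFsucc : ∀ m, (F (m + 1) : ℕ) = (hstep m (F m).1 (F m).2).choose := fun _ => rfl
  refine ⟨fun m => (F m).1, ?_, fun m => (F m).2.1, fun m => (F m).2.2, ?_, ?_⟩
  · intro m' hm'
    exact hk0sk m' hm'
  · intro m
    show (F m : ℕ) < (F (m + 1) : ℕ)
    rw [hFsucc m]
    exact (hstep m (F m).1 (F m).2).choose_spec.1
  · intro m t ht1 ht2
    have ht1' : (F m : ℕ) < t := ht1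
    have ht2' : t < (F (m + 1) : ℕ) := ht2
    rw [hFsucc m] at ht2'
    exact (hstep m (F m).1 (F m).2).choose_spec.2.2 t ht1' ht2'

lemma sim_passes (hctx : SimCtx C n c) (ha1 : 1 ≤ a) (hane : a ≠ c) :
    (∀ i z, c ≤ z →
      (pipePasses (newC C c (n - 1)) (newcol c a) ((i, z), false) ↔
        pipePasses C a ((i, z + 1), false))) ∧
    (∀ i z, z < c →
      (pipePasses (newC C c (n - 1)) (newcol c a) ((i, z), false) ↔
        ∃ i0, pipePasses C a ((i0, z), false) ∧
          i = i0 - (if rho C c z < i0 then 1 else 0))) := by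
  classical
  obtain ⟨F, hsk0, hns, hpsi, hmono, hgap⟩ := sim_seq hctx ha1 hane
  have hSM : StrictMono F := strictMono_nat_of_lt_succ hmono
  have hcover : ∀ k, ¬ Skip C c (pipeState C a k) → ∃ m, F m = k := by
    intro k hk
    have h0 : F 0 ≤ k := by
      by_contra h
      exact hk (hsk0 k (by omega))
    have hex2 : ∃ m, k < F (m + 1) := by
      refine ⟨k, ?_⟩
      have : k + 1 ≤ F (k + 1) := hSM.le_apply
      omega
    set m0 := Nat.find hex2 with hm0
    have hspec : k < F (m0 + 1) := Nat.find_spec hex2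
    have hlow : F m0 ≤ k := by
      rcases Nat.eq_zero_or_pos m0 with h | h
      · rw [h]; exact h0
      · have := Nat.find_min hex2 (show m0 - 1 < m0 by omega)
        rw [show m0 - 1 + 1 = m0 by omega] at this
        omega
    rcases Nat.eq_or_lt_of_le hlow with h | h
    · exact ⟨m0, h⟩
    · exact absurd (hgap m0 k h hspec) hk
  constructor
  · intro i z hz
    constructor
    · rintro ⟨m, hm⟩
      rw [hpsi m] at hm
      rcases hE : pipeState C a (F m) with ⟨⟨i2, y2⟩, d2⟩
      rw [hE] at hm
      have hnsm := hns m
      rw [hE] at hnsm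
      by_cases hcy : c < y2
      · rw [psi_gt hcy] at hm
        simp only [Prod.mk.injEq] at hm
        obtain ⟨⟨h1, h2⟩, h3⟩ := hm
        refine ⟨F m, ?_⟩
        rw [hE, h3]
        congr 2 <;> omega
      · exfalso
        have hy2 : (psi C c ((i2, y2), d2)).1.2 = y2 := by
          rw [psi]
          simp [hcy]
        rw [hm] at hy2
        simp only at hy2
        apply hnsm
        have : y2 = c := by omega
        rw [this]
        exact skip_col
    · rintro ⟨k, hk⟩
      have hnsk : ¬ Skip C c (pipeState C a k) := by
        rw [hk]; exact not_skip_false (by omega)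
      obtain ⟨m, hm⟩ := hcover k hnsk
      refine ⟨m, ?_⟩
      rw [hpsi m, hm, hk, psi_gt (by omega)]
      simp
  · intro i z hz
    constructor
    · rintro ⟨m, hm⟩
      rw [hpsi m] at hm
      rcases hE : pipeState C a (F m) with ⟨⟨i2, y2⟩, d2⟩
      rw [hE] at hm
      have hnsm := hns m
      rw [hE] at hnsm
      by_cases hcy : c < y2
      · exfalso
        rw [psi_gt hcy] at hm
        simp only [Prod.mk.injEq] at hm
        omega
      · cases d2
        · rw [psi_le_false hcy] at hm
          simp only [Prod.mk.injEq] at hm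
          obtain ⟨⟨h1, h2⟩, -⟩ := hm
          subst h2
          exact ⟨i2, ⟨F m, hE⟩, h1.symm⟩
        · exfalso
          rw [psi_le_true hcy] at hm
          simp only [Prod.mk.injEq] at hm
          exact Bool.noConfusion hm.2
    · rintro ⟨i0, ⟨k, hk⟩, hi⟩
      have hnsk : ¬ Skip C c (pipeState C a k) := by
        rw [hk]; exact not_skip_false (by omega)
      obtain ⟨m, hm⟩ := hcover k hnsk
      refine ⟨m, ?_⟩
      rw [hpsi m, hm, hk, psi_le_false (by omega), hi]

lemma sim_transfer (hctx : SimCtx C n c) (ha1 : 1 ≤ a) (hane : a ≠ c)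
    (haabs : (pipeState C a (2 * n + 4)).1.2 = 0) :
    (∀ z i, c ≤ z → z + 1 < a →
      (crossedIntoLe (newC C c (n - 1)) (newcol c a) z i ↔ rho C a (z + 1) ≤ i)) ∧
    (∀ z i, z < c → z < a →
      (crossedIntoLe (newC C c (n - 1)) (newcol c a) z i ↔
        rho C a z - (if rho C c z < rho C a z then 1 else 0) ≤ i)) := by
  obtain ⟨hG1, hG2⟩ := sim_passes hctx ha1 hane
  have hc1 := hctx.hc1
  have hca1 : 1 ≤ newcol c a := by
    unfold newcol; split_ifs <;> omega
  constructor
  · intro z i hz hza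
    have hexold : ∃ r, pipePasses C a ((r, z + 1), false) := pass_exists haabs (by omega)
    have hpassnew : pipePasses (newC C c (n - 1)) (newcol c a) ((rho C a (z + 1), z), false) :=
      (hG1 _ z hz).2 (rho_pass hexold)
    rw [crossedIntoLe_iff hca1 ⟨_, hpassnew⟩, rho_eq hca1 hpassnew]
  · intro z i hz hza
    have hexold : ∃ r, pipePasses C a ((r, z), false) := pass_exists haabs hza
    have hpassnew : pipePasses (newC C c (n - 1)) (newcol c a)
        ((rho C a z - (if rho C c z < rho C a z then 1 else 0), z), false) :=
      (hG2 _ z hz).2 ⟨rho C a z, rho_pass hexold, rfl⟩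
    rw [crossedIntoLe_iff hca1 ⟨_, hpassnew⟩, rho_eq hca1 hpassnew]

end SimMain

section WordCol

lemma length_filter_erase {v : List ℕ} {j : ℕ} (hj : j ∈ v) (p : ℕ → Bool) :
    ((v.erase j).filter p).length + (if p j then 1 else 0) = (v.filter p).length := by
  have hperm : List.Perm v (j :: v.erase j) := List.perm_cons_erase hj
  have hlen := (hperm.filter p).length_eq
  rw [List.filter_cons] at hlen
  by_cases hpj : p j <;> simp [hpj] at hlen ⊢ <;> omega

lemma wordCol_erase {v : List ℕ} {j : ℕ} (j' : ℕ) (hj : j ∈ v) :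
    wordCol (v.erase j) j' + (if j < j' then 1 else 0) = wordCol v j' := by
  unfold wordCol
  have := length_filter_erase hj (fun y => decide (y < j'))
  by_cases h : j < j' <;> simp [h] at this ⊢ <;> omega

lemma countP_mono {p q : ℕ → Bool} (h : ∀ x, p x = true → q x = true) :
    ∀ l : List ℕ, l.countP p ≤ l.countP q := by
  intro l
  induction l with
  | nil => simp
  | cons x xs ih =>
    rw [List.countP_cons, List.countP_cons]
    by_cases hx : p x
    · rw [hx, h x hx]
      omega
    · have : (if p x = true then 1 else 0) = 0 := by simp [hx]
      rw [this]
      omega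

lemma wordCol_le {v : List ℕ} {x : ℕ} (hx : x ∈ v) : wordCol v x ≤ v.length := by
  unfold wordCol
  have hsub := List.filter_sublist (l := v) (p := fun y => decide (y < x))
  have hle := hsub.length_le
  rcases Nat.eq_or_lt_of_le hle with h | h
  · exfalso
    have := hsub.eq_of_length h
    rw [← this] at hx
    have := List.of_mem_filter hx
    simp at this
  · omega

lemma wordCol_lt {v : List ℕ} {j j' : ℕ} (hj : j ∈ v) (hjj : j < j') :
    wordCol v j < wordCol v j' := by
  unfold wordCol
  have hA := length_filter_erase hj (fun y => decide (y < j))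
  have hB := length_filter_erase hj (fun y => decide (y < j'))
  have hmono : ((v.erase j).filter (fun y => decide (y < j))).length ≤
      ((v.erase j).filter (fun y => decide (y < j'))).length := by
    rw [← List.countP_eq_length_filter, ← List.countP_eq_length_filter]
    refine countP_mono ?_ _
    intro x hx
    simp at hx ⊢
    omega
  rw [if_neg (by simp)] at hA
  rw [if_pos (by simp [hjj])] at hB
  omega

lemma one_le_wordCol (v : List ℕ) (x : ℕ) : 1 ≤ wordCol v x := by
  unfold wordCol; omega

end WordCol

section Derive

/-- A removable pipe satisfies all hypotheses of the simulation. -/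
lemma simctx_of_removable (P : PD) (hP : isMRPD P) {j : ℕ} (hj : Removable P j) :
    SimCtx P.C P.word.length (wordCol P.word j) := by
  classical
  obtain ⟨hnodup, hpos, hCsub, hCsum, hMsub, hMC, hexit, hred, hmark⟩ := hP
  obtain ⟨hjv, hcol, hnoM, habove, hnomark⟩ := hj
  have hc1 : 1 ≤ wordCol P.word j := one_le_wordCol _ _
  have hcn : wordCol P.word j ≤ P.word.length := wordCol_le hjv
  set v := P.word with hv
  set n := v.length with hn
  set C := P.C with hCq
  set c := wordCol v j with hc
  obtain ⟨r, hr⟩ := List.mem_iff_get.1 hjv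
  have hexitj := hexit r
  rw [hr] at hexitj
  have habs : (pipeState C c (2 * n + 4)).1.2 = 0 := by
    apply absorbed_of_exit_le hc1 hcn
    rw [show (pipeState C c (2 * n + 4)).1.1 = exitRow n C c from rfl, hexitj]
    have := r.2
    omega
  -- the deleted pipe goes straight down its column through crossings, then exits left
  have hfind : ∃ i, (i + 1, c) ∉ C := by
    refine ⟨n, fun hmem => ?_⟩
    have := hCsum _ hmem
    simp only at this
    omega
  set m0 := Nat.find hfind with hm0
  have hm0spec : (m0 + 1, c) ∉ C := Nat.find_spec hfind
  have hm0min : ∀ m, m < m0 → (m + 1, c) ∈ C := by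
    intro m hm
    have := Nat.find_min hfind hm
    simpa using this
  have hclaimA : ∀ k, k ≤ m0 → pipeState C c k = ((k + 1, c), true) := by
    intro k
    induction k with
    | zero => intro _; exact pipeState_zero c
    | succ k ih =>
      intro hk
      rw [pipeState_succ, ih (by omega), step_mem_true (by omega) (hm0min k (by omega))]
  have hpassr : pipePasses C c ((m0 + 1, c - 1), false) := by
    refine ⟨m0 + 1, ?_⟩
    rw [pipeState_succ, hclaimA m0 le_rfl, step_not_mem_true (by omega) hm0spec]
  have hr0 : rho C c (c - 1) = m0 + 1 := rho_eq hc1 hpassr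
  have hS3 : ∀ i, 1 ≤ i → ((i, c) ∈ C ↔ i < rho C c (c - 1)) := by
    intro i hi
    rw [hr0]
    constructor
    · intro hmem
      by_contra hge
      rcases hcol i hmem with htrav | htrav
      · obtain ⟨k, hk⟩ := htrav
        have hnab : (pipeState C c k).1.2 ≠ 0 := by rw [hk]; simp; omega
        have hpot := potential hnab
        have hrow : (pipeState C c k).1.1 = i := by rw [hk]
        have hcolk : (pipeState C c k).1.2 = c := by rw [hk]
        have him : i ≠ m0 + 1 := fun h => hm0spec (h ▸ hmem)
        have hanti := col_anti (C := C) c (show m0 + 1 ≤ k by omega)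
        have hc2 : (pipeState C c (m0 + 1)).1.2 = c - 1 := by
          rw [pipeState_succ, hclaimA m0 le_rfl, step_not_mem_true (by omega) hm0spec]
        rw [hc2, hcolk] at hanti
        omega
      · have := pass_false_lt hc1 htrav
        omega
    · intro hlt
      have := hm0min (i - 1) (by omega)
      rwa [show i - 1 + 1 = i by omega] at this
  refine ⟨hc1, hcn, habs, hCsum, hS3, ?_⟩
  -- dichotomy in the columns to the left
  intro w hw1 hwc
  have hexw : ∃ i, pipePasses C c ((i, w), false) := pass_exists habs hwc
  have hpass := rho_pass hexw
  have hrpos : 1 ≤ rho C c w := rho_pos hexw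
  by_cases hmem : (rho C c w, w) ∈ C
  · left
    refine ⟨hmem, ?_⟩
    have := pass_step hpass
    rw [step_mem_false (by omega) hmem] at this
    exact rho_eq hc1 this
  · right
    have hpass2 := pass_step hpass
    rw [step_not_mem_false (by omega) hmem] at hpass2
    have hmem2 : (rho C c w + 1, w) ∉ C := by
      intro hmem2
      rcases habove _ hmem2 (Or.inl hpass2) (by simp; omega) with h | h
      · simp only [Nat.add_sub_cancel] at h
        exact hmem h
      · simp only [Nat.add_sub_cancel] at h
        exact (hnomark _ h).2 hpass
    have hpass3 := pass_step hpass2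
    rw [step_not_mem_true (by omega) hmem2] at hpass3
    exact ⟨hmem, hmem2, rho_eq hc1 hpass3, hpass2⟩

end Derive

section Key

variable {C : Finset (ℕ × ℕ)} {n c c'' : ℕ}

lemma oldPos_true_of_iff {C₀ : Finset (ℕ × ℕ)} {c₀ i y b : ℕ} (h : ¬ c₀ ≤ y)
    (hiff : crossedIntoLe C₀ c₀ (y - 1) i ↔ b ≤ i) :
    oldPos C₀ c₀ ((i, y) : ℕ × ℕ) true = (i + (if b ≤ i then 1 else 0), y) := by
  have h' : ¬ c₀ ≤ ((i, y) : ℕ × ℕ).2 := h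
  simp only [oldPos, if_neg h']
  by_cases hb : b ≤ i
  · rw [if_pos hb]
    congr 1
    simp only [if_true]
    rw [cIte_pos (hiff.2 hb)]
  · rw [if_neg hb]
    congr 1
    simp only [if_true]
    rw [cIte_neg (fun hcr => hb (hiff.1 hcr))]

lemma oldPos_bounds (C₀ : Finset (ℕ × ℕ)) (c₀ : ℕ) (t : ℕ × ℕ) (d : Bool) :
    t.1 ≤ (oldPos C₀ c₀ t d).1 ∧ (oldPos C₀ c₀ t d).1 ≤ t.1 + 1 ∧
    t.2 ≤ (oldPos C₀ c₀ t d).2 ∧ (oldPos C₀ c₀ t d).2 ≤ t.2 + 1 ∧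
    (oldPos C₀ c₀ t d).1 + (oldPos C₀ c₀ t d).2 ≤ t.1 + t.2 + 1 := by
  obtain ⟨i, y⟩ := t
  by_cases h : c₀ ≤ y
  · rw [oldPos_ge (show c₀ ≤ ((i, y) : ℕ × ℕ).2 from h)]
    simp
    omega
  · simp only [oldPos, if_neg (show ¬ c₀ ≤ ((i, y) : ℕ × ℕ).2 from h)]
    by_cases h2 : crossedIntoLe C₀ c₀ (if d then y - 1 else y) i
    · rw [cIte_pos h2]; simp; omega
    · rw [cIte_neg h2]; simp

/-- The heart of the commutation: the two composed position maps agree. -/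
lemma key_pos (hctx1 : SimCtx C n c) (hctx2 : SimCtx C n c'') (hcc : c < c'')
    (hne : ∀ z, z < c → rho C c z ≠ rho C c'' z)
    {i y : ℕ} (hi1 : 1 ≤ i) (hy1 : 1 ≤ y) (hsum : i + y + 1 ≤ n) :
    oldPos C c (oldPos (newC C c (n - 1)) (c'' - 1) ((i, y) : ℕ × ℕ) true) true =
      oldPos C c'' (oldPos (newC C c'' (n - 1)) c ((i, y) : ℕ × ℕ) true) true := by
  have hc1 := hctx1.hc1
  have hc''1 := hctx2.hc1
  have hc''n := hctx2.hcn
  have hT1 := sim_transfer hctx1 (a := c'') (by omega) (by omega) hctx2.habs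
  have hT2 := sim_transfer hctx2 (a := c) (by omega) (by omega) hctx1.habs
  have hnc1 : newcol c c'' = c'' - 1 := by simp [newcol, hcc]
  have hnc2 : newcol c'' c = c := by rw [newcol, if_neg (by omega)]
  rw [hnc1] at hT1
  rw [hnc2] at hT2
  by_cases hy : c'' - 1 ≤ y
  · -- region 1 : to the right of both columns
    rw [oldPos_ge (show c'' - 1 ≤ ((i, y) : ℕ × ℕ).2 from hy),
      oldPos_ge (show c ≤ ((i, y + 1) : ℕ × ℕ).2 by simp; omega),
      oldPos_ge (show c ≤ ((i, y) : ℕ × ℕ).2 by simp; omega),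
      oldPos_ge (show c'' ≤ ((i, y + 1) : ℕ × ℕ).2 by simp; omega)]
  · by_cases hyc : c ≤ y
    · -- region 2 : between the two columns
      have hcr : crossedIntoLe (newC C c (n - 1)) (c'' - 1) (y - 1) i ↔
          rho C c'' y ≤ i := by
        rcases Nat.eq_or_lt_of_le hyc with hyeq | hygt
        · -- y = c : the traced pipe crosses the deleted column here
          have hy1c : y - 1 < c := by omega
          rw [hT1.2 (y - 1) i hy1c (by omega)]
          have hpassc : pipePasses C c'' ((rho C c'' y, y), false) :=
            rho_pass (hctx2.hex (by omega))
          have hpos2 : 1 ≤ rho C c'' y := rho_pos (hctx2.hex (by omega))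
          rw [← hyeq] at hpassc hpos2 ⊢
          by_cases hmem : (rho C c'' c, c) ∈ C
          · have hlt := (hctx1.hS3 _ hpos2).1 hmem
            have hnext := pass_step hpassc
            rw [step_mem_false (by omega) hmem] at hnext
            have he : rho C c'' (c - 1) = rho C c'' c := rho_eq (by omega) hnext
            rw [he, if_neg (by omega)]
            simp
          · have hge : ¬ rho C c'' c < rho C c (c - 1) :=
              fun h => hmem ((hctx1.hS3 _ hpos2).2 h)
            have hmem2 : (rho C c'' c + 1, c) ∉ C := by
              intro h
              have := (hctx1.hS3 _ (by omega)).1 h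
              omega
            have hpass2 := pass_step hpassc
            rw [step_not_mem_false (by omega) hmem] at hpass2
            have hpass3 := pass_step hpass2
            rw [step_not_mem_true (by omega) hmem2] at hpass3
            have he : rho C c'' (c - 1) = rho C c'' c + 1 := rho_eq (by omega) hpass3
            rw [he, if_pos (by omega)]
            simp
        · -- c < y : the deleted pipe never reaches this column
          have := hT1.1 (y - 1) i (by omega) (by omega)
          rw [show y - 1 + 1 = y by omega] at this
          exact this
      rw [oldPos_true_of_iff (by omega) hcr,
        oldPos_ge (show c ≤ ((i + (if rho C c'' y ≤ i then 1 else 0), y) : ℕ × ℕ).2 from hyc),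
        oldPos_ge (show c ≤ ((i, y) : ℕ × ℕ).2 from hyc),
        oldPos_true_of_iff (show ¬ c'' ≤ y + 1 by omega)
          (by rw [show y + 1 - 1 = y by omega]
              exact crossedIntoLe_iff (by omega) (hctx2.hex (by omega)))]
    · -- region 3 : to the left of both columns
      have hylt : y < c := by omega
      have hz : y - 1 < c := by omega
      set A := rho C c (y - 1) with hA
      set B := rho C c'' (y - 1) with hB
      have hAB : A ≠ B := hne (y - 1) hz
      have hiff1 : crossedIntoLe (newC C c (n - 1)) (c'' - 1) (y - 1) i ↔
          B - (if A < B then 1 else 0) ≤ i := hT1.2 (y - 1) i hz (by omega)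
      have hiff2 : crossedIntoLe (newC C c'' (n - 1)) c (y - 1) i ↔
          A - (if B < A then 1 else 0) ≤ i := hT2.2 (y - 1) i (by omega) hz
      rw [oldPos_true_of_iff (by omega) hiff1, oldPos_true_of_iff (by omega) hiff2,
        oldPos_true_of_iff (show ¬ c ≤ y by omega)
          (crossedIntoLe_iff hc1 (hctx1.hex hz)),
        oldPos_true_of_iff (show ¬ c'' ≤ y by omega)
          (crossedIntoLe_iff hc''1 (hctx2.hex (by omega)))]
      rw [← hA, ← hB]
      have hA1 : 1 ≤ A := hctx1.rho1 hz
      have hB1 : 1 ≤ B := hctx2.rho1 (by omega)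
      refine Prod.ext ?_ rfl
      simp only
      split_ifs <;> omega

end Key

/-- The marked-tile set after deleting the pipe entering at column `c`. -/
noncomputable def newM (C M : Finset (ℕ × ℕ)) (c m : ℕ) : Finset (ℕ × ℕ) :=
  fselect (fun t => oldPos C c t true ∈ M) (staircase m)

lemma mem_newM {C M : Finset (ℕ × ℕ)} {c m : ℕ} {t : ℕ × ℕ} :
    t ∈ newM C M c m ↔ t ∈ staircase m ∧ oldPos C c t true ∈ M := mem_fselect

lemma PhiOp_eq (P : PD) (j : ℕ) :
    PhiOp P j = ⟨P.word.erase j,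
      newC P.C (wordCol P.word j) (P.word.length - 1),
      newM P.C P.M (wordCol P.word j) (P.word.length - 1)⟩ := rfl

lemma phiOp_comm_aux (P : PD) (hP : isMRPD P) {j j' : ℕ} (hjj : j < j')
    (hj : Removable P j) (hj' : Removable P j') :
    PhiOp (PhiOp P j) j' = PhiOp (PhiOp P j') j := by
  classical
  have hctx1 := simctx_of_removable P hP hj
  have hctx2 := simctx_of_removable P hP hj'
  obtain ⟨hnodup, hpos, hCsub, hCsum, hMsub, hMC, hexit, hred, hmark⟩ := hP
  have hjv := hj.1
  have hj'v := hj'.1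
  set v := P.word with hv
  set n := v.length with hn
  set C := P.C with hCq
  set M := P.M with hM
  set c := wordCol v j with hc
  set c'' := wordCol v j' with hc''
  have hcc : c < c'' := wordCol_lt hjv hjj
  have hc1 := hctx1.hc1
  have hc''n := hctx2.hcn
  have hn2 : 2 ≤ n := by omega
  obtain ⟨r1, hr1⟩ := List.mem_iff_get.1 hjv
  obtain ⟨r2, hr2⟩ := List.mem_iff_get.1 hj'v
  have hexit1 := hexit r1
  have hexit2 := hexit r2
  rw [hr1] at hexit1
  rw [hr2] at hexit2
  have hne : ∀ z, z < c → rho C c z ≠ rho C c'' z := by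
    intro z hz heq
    rcases Nat.eq_zero_or_pos z with h0 | h1
    · subst h0
      have e1 := exit_row_eq hctx1.habs (rho_pass (hctx1.hex (by omega)))
      have e2 := exit_row_eq hctx2.habs (rho_pass (hctx2.hex (by omega)))
      have hr12 : (r1 : ℕ) = (r2 : ℕ) := by
        have q1 : exitRow n C c = (r1 : ℕ) + 1 := hexit1
        have q2 : exitRow n C c'' = (r2 : ℕ) + 1 := hexit2
        rw [show exitRow n C c = (pipeState C c (2 * n + 4)).1.1 from rfl] at q1
        rw [show exitRow n C c'' = (pipeState C c'' (2 * n + 4)).1.1 from rfl] at q2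
        omega
      have : r1 = r2 := Fin.ext hr12
      rw [this, hr2] at hr1
      omega
    · have hp1 : pipePasses C c ((rho C c z, z), false) := rho_pass (hctx1.hex hz)
      have hp2 : pipePasses C c'' ((rho C c z, z), false) := by
        rw [heq]; exact rho_pass (hctx2.hex (by omega))
      have := passes_eq_start hc1 hctx2.hc1 hp1 hp2 (by simp; omega)
      omega
  have hcol1 : wordCol (v.erase j) j' = c'' - 1 := by
    have := wordCol_erase j' hjv
    rw [if_pos hjj] at this
    omega
  have hcol2 : wordCol (v.erase j') j = c := by
    have := wordCol_erase j hj'v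
    rw [if_neg (by omega)] at this
    omega
  have hlen1 : (v.erase j).length = n - 1 := by
    rw [List.length_erase_of_mem hjv]
  have hlen2 : (v.erase j').length = n - 1 := by
    rw [List.length_erase_of_mem hj'v]
  have hstair : ∀ (C₀ : Finset (ℕ × ℕ)) (c₀ : ℕ) (t : ℕ × ℕ),
      t ∈ staircase (n - 1 - 1) → oldPos C₀ c₀ t true ∈ staircase (n - 1) := by
    intro C₀ c₀ t ht
    have h1 := mem_staircase.1 ht
    have h2 := oldPos_bounds C₀ c₀ t true
    rw [mem_staircase]
    omega
  have hkey : ∀ t : ℕ × ℕ, t ∈ staircase (n - 1 - 1) →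
      oldPos C c (oldPos (newC C c (n - 1)) (c'' - 1) t true) true =
        oldPos C c'' (oldPos (newC C c'' (n - 1)) c t true) true := by
    rintro ⟨i, y⟩ ht
    have h1 := mem_staircase.1 ht
    simp only at h1
    exact key_pos hctx1 hctx2 hcc hne h1.1 h1.2.1 (by omega)
  rw [PhiOp_eq P j, PhiOp_eq P j', PhiOp_eq, PhiOp_eq]
  simp only
  rw [PD.mk.injEq]
  refine ⟨List.erase_comm j j', ?_, ?_⟩
  · -- crossing sets agree
    rw [hcol1, hcol2, hlen1, hlen2]
    apply Finset.ext
    intro t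
    rw [mem_newC, mem_newC, mem_newC, mem_newC]
    constructor
    · rintro ⟨h1, h2, h3⟩
      exact ⟨h1, hstair _ _ _ h1, by rw [← hkey t h1]; exact h3⟩
    · rintro ⟨h1, h2, h3⟩
      exact ⟨h1, hstair _ _ _ h1, by rw [hkey t h1]; exact h3⟩
  · -- marked sets agree
    rw [hcol1, hcol2, hlen1, hlen2]
    apply Finset.ext
    intro t
    rw [mem_newM, mem_newM, mem_newM, mem_newM]
    constructor
    · rintro ⟨h1, h2, h3⟩
      exact ⟨h1, hstair _ _ _ h1, by rw [← hkey t h1]; exact h3⟩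
    · rintro ⟨h1, h2, h3⟩
      exact ⟨h1, hstair _ _ _ h1, by rw [hkey t h1]; exact h3⟩

/-- If pipes `j` and `j'` (`j ≠ j'`) are both removable in `P ∈ MRPD(w)`,
then the deletion operations commute: `Φ_{j'}(Φ_j(P)) = Φ_j(Φ_{j'}(P))`. -/
theorem phiOp_comm (n : ℕ) (w : Equiv.Perm (Fin n)) (P : PD)
    (hword : P.word = permWord w) (hP : isMRPD P) (j j' : ℕ) (hne : j ≠ j')
    (hj : Removable P j) (hj' : Removable P j') :
    PhiOp (PhiOp P j) j' = PhiOp (PhiOp P j') j := by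
  rcases Nat.lt_or_ge j j' with hlt | hge
  · exact phiOp_comm_aux P hP hlt hj hj'
  · have hlt : j' < j := by omega
    exact (phiOp_comm_aux P hP hlt hj' hj).symm

end GrothPS
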